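/- arXiv:2403.08054 — 2 statements merged into one kernel-verified Lean document; each statement's English description precedes it below -/
import Mathlib

section
/- (Combined one-step lower bound.) Let h : [t₀, t₀+T_pre) → ℝ be differentiable, g : [t₀, t₀+T_pre) → ℝ continuous, and c, c' ∈ ℝ. Suppose h'(t) + c·φ(t)·h(t) = g(t) for all t ∈ [t₀, t₀+T_pre) and g(t) ≥ g(t₀)·exp(−c' ∫_{t₀}^{t} φ(s) ds) for all t ∈ [t₀, t₀+T_pre). Then for all t ∈ [t₀, t₀+T_pre): h(t) ≥ g(t₀)·∫_{t₀}^{t} exp(−[c ∫_{τ}^{t} φ(s) ds + c' ∫_{t₀}^{τ} φ(s) ds]) dτ + h(t₀)·exp(−c ∫_{t₀}^{t} φ(s) ds). -/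
/-!
With `Φ(τ) = ∫_{t₀}^τ φ`, the integrating factor turns the equation into
`(h e^{cΦ})' = g e^{cΦ} ≥ g(t₀) e^{(c - c')Φ}`. Integrating from `t₀` to `t` and multiplying
by `e^{-cΦ(t)}` gives the bound, since `c ∫_τ^t φ + c' ∫_{t₀}^τ φ = cΦ(t) - (c - c')Φ(τ)`.
-/

noncomputable def blowup (t₀ Tpre α : ℝ) (t : ℝ) : ℝ :=
  (Tpre ^ 2 + α * ((t - t₀) ^ 2 - (t - t₀) * Tpre) ^ 2) / (Tpre + t₀ - t) ^ 2

open Set Real intervalIntegral MeasureTheory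

theorem continuousOn_blowup (t₀ Tpre α : ℝ) :
    ContinuousOn (blowup t₀ Tpre α) (Iio (t₀ + Tpre)) := by
  refine ContinuousOn.div (by fun_prop) (by fun_prop) fun t ht => ?_
  have : Tpre + t₀ - t ≠ 0 := by rw [mem_Iio] at ht; linarith
  positivity

section LinearODE

variable {φ : ℝ → ℝ} {a b : ℝ}

theorem hasDerivAt_integral_of_mem_Ioo (hφ : ContinuousOn φ (Icc a b)) {τ : ℝ}
    (hτ : τ ∈ Ioo a b) : HasDerivAt (fun u => ∫ s in a..u, φ s) (φ τ) τ :=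
  integral_hasDerivAt_right
    ((hφ.mono (uIcc_of_le hτ.1.le ▸ Icc_subset_Icc_right hτ.2.le)).intervalIntegrable)
    ((hφ.mono Ioo_subset_Icc_self).stronglyMeasurableAtFilter isOpen_Ioo τ hτ)
    (hφ.continuousAt (Icc_mem_nhds hτ.1 hτ.2))

theorem integral_exp_neg_integral_split (hφ : IntervalIntegrable φ volume a b) (c c' : ℝ) :
    ∫ τ in a..b, exp (-(c * (∫ s in τ..b, φ s) + c' * ∫ s in a..τ, φ s)) =
      exp (-c * ∫ s in a..b, φ s) * ∫ τ in a..b, exp ((c - c') * ∫ s in a..τ, φ s) := by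
  rw [← intervalIntegral.integral_const_mul]
  refine integral_congr fun τ hτ => ?_
  have hsplit : ∫ s in τ..b, φ s = (∫ s in a..b, φ s) - ∫ s in a..τ, φ s :=
    (integral_interval_sub_left hφ (hφ.mono_set (uIcc_subset_uIcc_left hτ))).symm
  rw [hsplit, ← exp_add]
  congr 1
  ring

theorem le_of_deriv_add_mul_ge (hab : a ≤ b) (hφ : ContinuousOn φ (Icc a b))
    {h h' : ℝ → ℝ} {c c' k : ℝ} (hh : ContinuousOn h (Icc a b))
    (hderiv : ∀ τ ∈ Ioo a b, HasDerivAt h (h' τ) τ)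
    (hforce : ∀ τ ∈ Ioo a b, k * exp (-c' * ∫ s in a..τ, φ s) ≤ h' τ + c * φ τ * h τ) :
    k * (∫ τ in a..b, exp (-(c * (∫ s in τ..b, φ s) + c' * ∫ s in a..τ, φ s))) +
      h a * exp (-c * ∫ s in a..b, φ s) ≤ h b := by
  set Φ : ℝ → ℝ := fun u => ∫ s in a..u, φ s
  have hΦcont : ContinuousOn Φ (Icc a b) := by
    simpa only [uIcc_of_le hab] using continuousOn_primitive_interval (μ := volume)
      (hφ.integrableOn_Icc.mono_set (uIcc_of_le hab).subset)
  have hfactor : ContinuousOn (fun τ => h τ * exp (c * Φ τ)) (Icc a b) :=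
    hh.mul (continuous_exp.comp_continuousOn (hΦcont.const_smul c))
  have hfactor_deriv : ∀ τ ∈ Ioo a b, HasDerivAt (fun τ => h τ * exp (c * Φ τ))
      ((h' τ + c * φ τ * h τ) * exp (c * Φ τ)) τ := fun τ hτ =>
    ((hderiv τ hτ).mul ((hasDerivAt_integral_of_mem_Ioo hφ hτ).const_mul c).exp).congr_deriv
      (by ring)
  have hintegrated : ∫ τ in a..b, k * exp ((c - c') * Φ τ) ≤
      h b * exp (c * Φ b) - h a * exp (c * Φ a) := by
    refine integral_le_sub_of_hasDeriv_right_of_le hab hfactor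
      (fun τ hτ => (hfactor_deriv τ hτ).hasDerivWithinAt)
      (continuousOn_const.mul (continuous_exp.comp_continuousOn
        (hΦcont.const_smul (c - c')))).integrableOn_Icc fun τ hτ => ?_
    calc k * exp ((c - c') * Φ τ) = k * exp (-c' * Φ τ) * exp (c * Φ τ) := by
          rw [mul_assoc, ← exp_add]; congr 2; ring
      _ ≤ (h' τ + c * φ τ * h τ) * exp (c * Φ τ) := by gcongr; exact hforce τ hτ
  have hΦa : Φ a = 0 := integral_same
  rw [intervalIntegral.integral_const_mul, hΦa, mul_zero, exp_zero, mul_one] at hintegrated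
  rw [integral_exp_neg_integral_split (hφ.intervalIntegrable_of_Icc hab)]
  change k * (exp (-c * Φ b) * ∫ τ in a..b, exp ((c - c') * Φ τ)) + h a * exp (-c * Φ b) ≤ h b
  have hcancel : exp (-c * Φ b) * exp (c * Φ b) = 1 := by rw [← exp_add]; simp
  have hscaled := mul_le_mul_of_nonneg_left hintegrated (exp_pos (-c * Φ b)).le
  linear_combination hscaled + h b * hcancel

end LinearODE

theorem combined_one_step_lower_bound_general (t₀ Tpre α : ℝ)
    (h h' g : ℝ → ℝ) (c c' : ℝ)
    (hderiv : ∀ t ∈ Set.Ico t₀ (t₀ + Tpre), HasDerivAt h (h' t) t)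
    (hode : ∀ t ∈ Set.Ico t₀ (t₀ + Tpre),
      h' t + c * blowup t₀ Tpre α t * h t = g t)
    (hglb : ∀ t ∈ Set.Ico t₀ (t₀ + Tpre),
      g t ≥ g t₀ * Real.exp (-c' * ∫ s in t₀..t, blowup t₀ Tpre α s)) :
    ∀ t ∈ Set.Ico t₀ (t₀ + Tpre),
      h t ≥ g t₀ * (∫ τ in t₀..t,
          Real.exp (-(c * (∫ s in τ..t, blowup t₀ Tpre α s) +
            c' * ∫ s in t₀..τ, blowup t₀ Tpre α s))) +
        h t₀ * Real.exp (-c * ∫ s in t₀..t, blowup t₀ Tpre α s) := by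
  intro t ⟨ht₀, ht⟩
  have hsub : Icc t₀ t ⊆ Ico t₀ (t₀ + Tpre) := Icc_subset_Ico_right ht
  refine le_of_deriv_add_mul_ge ht₀
    ((continuousOn_blowup t₀ Tpre α).mono fun s hs => (hsub hs).2)
    (fun s hs => (hderiv s (hsub hs)).continuousAt.continuousWithinAt)
    (fun s hs => hderiv s (hsub (Ioo_subset_Icc_self hs))) fun s hs => ?_
  have hs' := hsub (Ioo_subset_Icc_self hs)
  exact (hode s hs').symm ▸ hglb s hs'

theorem combined_one_step_lower_bound (t₀ Tpre α : ℝ) (hT : 0 < Tpre) (hα : 0 ≤ α)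
    (h h' g : ℝ → ℝ) (c c' : ℝ)
    (hderiv : ∀ t ∈ Set.Ico t₀ (t₀ + Tpre), HasDerivAt h (h' t) t)
    (hg : ContinuousOn g (Set.Ico t₀ (t₀ + Tpre)))
    (hode : ∀ t ∈ Set.Ico t₀ (t₀ + Tpre),
      h' t + c * blowup t₀ Tpre α t * h t = g t)
    (hglb : ∀ t ∈ Set.Ico t₀ (t₀ + Tpre),
      g t ≥ g t₀ * Real.exp (-c' * ∫ s in t₀..t, blowup t₀ Tpre α s)) :
    ∀ t ∈ Set.Ico t₀ (t₀ + Tpre),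
      h t ≥ g t₀ * (∫ τ in t₀..t,
          Real.exp (-(c * (∫ s in τ..t, blowup t₀ Tpre α s) +
            c' * ∫ s in t₀..τ, blowup t₀ Tpre α s))) +
        h t₀ * Real.exp (-c * ∫ s in t₀..t, blowup t₀ Tpre α s) :=
  combined_one_step_lower_bound_general t₀ Tpre α h h' g c c' hderiv hode hglb
end

section
/- (Prescribed-time safety from an initially unsafe state, deterministic core.) Let n ≥ 1 and let c₁, …, cₙ be positive reals. Let h₁, …, hₙ : [t₀, t₀+T_pre) → ℝ be differentiable, satisfying the recursion h_{i+1}(t) = h_i'(t) + c_i·φ(t)·h_i(t) for all i = 1,…,n−1 and all t ∈ [t₀, t₀+T_pre), and suppose hₙ'(t) + cₙ·φ(t)·hₙ(t) ≥ 0 for all t ∈ [t₀, t₀+T_pre). Then liminf_{t → (t₀+T_pre)⁻} h₁(t) ≥ 0; in particular, if h₁ extends continuously to t₀+T_pre, then h₁(t₀+T_pre) ≥ 0, regardless of the sign of h₁(t₀). -/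
/-!
Multiplying by the integrating factor `exp (c G)`, where `G` is an antiderivative of the blow-up
function `φ`, turns `u' + c φ u ≥ -ε` into a lower bound on the growth of `exp (c G) u`; dividing
back, `u t ≥ exp (c (G s - G t)) u s - ε (t - s)`. Since `G → ∞` at the prescribed time, the
initial value `u s` is forgotten, however negative it is, and `u` is eventually `≥ -ε'` for any
`ε' > 0`. Running this backwards through the recursion from `hₙ` down to `h₁` gives the claim.
-/

open Filter Set Real Topology

section IntegratingFactor

variable {u u' F f : ℝ → ℝ}

theorem exp_sub_mul_sub_le_of_hasDerivAt {s t ε : ℝ} (hε : 0 ≤ ε) (hst : s ≤ t)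
    (hu : ∀ r ∈ Icc s t, HasDerivAt u (u' r) r) (hF : ∀ r ∈ Icc s t, HasDerivAt F (f r) r)
    (hf : ∀ r ∈ Icc s t, 0 ≤ f r) (hineq : ∀ r ∈ Icc s t, -ε ≤ u' r + f r * u r) :
    exp (F s - F t) * u s - ε * (t - s) ≤ u t := by
  have hv : ∀ r ∈ Icc s t,
      HasDerivAt (fun r => exp (F r) * u r) (exp (F r) * (u' r + f r * u r)) r := fun r hr =>
    (((hF r hr).exp).mul (hu r hr)).congr_deriv (by ring)
  have hFmono : MonotoneOn F (Icc s t) :=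
    monotoneOn_of_hasDerivWithinAt_nonneg (convex_Icc s t)
      (fun r hr => (hF r hr).continuousAt.continuousWithinAt)
      (fun r hr => (hF r (interior_subset hr)).hasDerivWithinAt)
      (fun r hr => hf r (interior_subset hr))
  have hgrowth : -(ε * exp (F t)) * (t - s) ≤ exp (F t) * u t - exp (F s) * u s := by
    refine (convex_Icc s t).mul_sub_le_image_sub_of_le_deriv
      (fun r hr => (hv r hr).continuousAt.continuousWithinAt)
      (fun r hr => (hv r (interior_subset hr)).differentiableAt.differentiableWithinAt)
      (fun r hr => ?_) s (left_mem_Icc.2 hst) t (right_mem_Icc.2 hst) hst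
    rw [interior_Icc] at hr
    have hr' := Ioo_subset_Icc_self hr
    rw [(hv r hr').deriv]
    have hexp : exp (F r) ≤ exp (F t) := exp_le_exp.2 (hFmono hr' (right_mem_Icc.2 hst) hr.2.le)
    nlinarith [hineq r hr', exp_pos (F r)]
  have hfactor : exp (F t) * (exp (F s - F t) * u s - ε * (t - s))
      = exp (F s) * u s - ε * exp (F t) * (t - s) := by
    rw [exp_sub]; field_simp
  exact le_of_mul_le_mul_left (by linarith) (exp_pos (F t))

theorem forall_eventually_neg_le_of_integrating_factor {a b : ℝ} (hab : a < b)
    (hu : ∀ r ∈ Ico a b, HasDerivAt u (u' r) r) (hF : ∀ r ∈ Ico a b, HasDerivAt F (f r) r)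
    (hf : ∀ r ∈ Ico a b, 0 ≤ f r) (hFtop : Tendsto F (𝓝[<] b) atTop)
    (hineq : ∀ ε > 0, ∀ᶠ r in 𝓝[<] b, -ε ≤ u' r + f r * u r) :
    ∀ ε > 0, ∀ᶠ r in 𝓝[<] b, -ε ≤ u r := by
  intro ε hε
  set δ := ε / (2 * (b - a)) with hδ
  have hδpos : 0 < δ := div_pos hε (by linarith)
  obtain ⟨l, hl, hIoo⟩ := mem_nhdsLT_iff_exists_Ioo_subset.1 (hineq δ hδpos)
  obtain ⟨s, hs, hsb⟩ := exists_between (max_lt hab hl)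
  rw [max_lt_iff] at hs
  have hdecay : Tendsto (fun t => exp (F s - F t) * u s) (𝓝[<] b) (𝓝 (0 * u s)) :=
    (tendsto_exp_atBot.comp (tendsto_atBot_add_const_left _ (F s)
      (tendsto_neg_atTop_atBot.comp hFtop))).mul_const (u s)
  rw [zero_mul] at hdecay
  filter_upwards [hdecay.eventually (eventually_gt_nhds (by linarith : -(ε / 2) < 0)),
    Ioo_mem_nhdsLT hsb] with t hdecay_t ht
  have hsub : Icc s t ⊆ Ico a b ∩ Ioo l b := fun r hr =>
    ⟨⟨hs.1.le.trans hr.1, hr.2.trans_lt ht.2⟩, hs.2.trans_le hr.1, hr.2.trans_lt ht.2⟩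
  have hbound := exp_sub_mul_sub_le_of_hasDerivAt hδpos.le ht.1.le
    (fun r hr => hu r (hsub hr).1) (fun r hr => hF r (hsub hr).1) (fun r hr => hf r (hsub hr).1)
    (fun r hr => hIoo (hsub hr).2)
  have hδε : δ * (t - s) ≤ ε / 2 := by
    calc δ * (t - s) ≤ δ * (b - a) := by gcongr <;> linarith [ht.2]
      _ = ε / 2 := by rw [hδ]; field_simp [(sub_pos.2 hab).ne']
  linarith

end IntegratingFactor

theorem liminf_nonneg_of_forall_eventually {α : Type*} {l : Filter α} {u : α → ℝ}
    (h : ∀ ε > 0, ∀ᶠ t in l, -ε ≤ u t) : 0 ≤ liminf u l := by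
  rw [liminf_eq]
  by_cases hbdd : BddAbove {a | ∀ᶠ t in l, a ≤ u t}
  · exact le_of_forall_pos_le_add fun ε hε => by linarith [le_csSup hbdd (h ε hε)]
  · rw [Real.sSup_of_not_bddAbove hbdd]

theorem nonneg_of_tendsto_of_forall_eventually {α : Type*} {l : Filter α} [l.NeBot]
    {u : α → ℝ} {x : ℝ} (hu : Tendsto u l (𝓝 x)) (h : ∀ ε > 0, ∀ᶠ t in l, -ε ≤ u t) : 0 ≤ x :=
  le_of_forall_pos_le_add fun ε hε => by linarith [ge_of_tendsto hu (h ε hε)]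

section Blowup

variable {t₀ Tpre α : ℝ}

theorem blowup_nonneg (hα : 0 ≤ α) (t : ℝ) : 0 ≤ blowup t₀ Tpre α t := by
  unfold blowup; positivity

/-- An antiderivative of `blowup`: away from the pole `t₀ + Tpre`, `(t - t₀) ^ 2 - (t - t₀) * Tpre`
factors as `-(t - t₀) * (t₀ + Tpre - t)`, so
`blowup t₀ Tpre α t = Tpre ^ 2 / (t₀ + Tpre - t) ^ 2 + α * (t - t₀) ^ 2`. -/
noncomputable def blowupPrimitive (t₀ Tpre α t : ℝ) : ℝ :=
  Tpre ^ 2 / (t₀ + Tpre - t) + α * (t - t₀) ^ 3 / 3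

theorem hasDerivAt_blowupPrimitive {t : ℝ} (ht : t ≠ t₀ + Tpre) :
    HasDerivAt (blowupPrimitive t₀ Tpre α) (blowup t₀ Tpre α t) t := by
  have hne : t₀ + Tpre - t ≠ 0 := sub_ne_zero.2 ht.symm
  have hder := ((hasDerivAt_const t (Tpre ^ 2)).div ((hasDerivAt_id' t).const_sub (t₀ + Tpre))
    hne).add ((((hasDerivAt_id' t).sub_const t₀).pow 3).const_mul α |>.div_const 3)
  refine hder.congr_deriv ?_
  unfold blowup
  rw [show Tpre + t₀ - t = t₀ + Tpre - t by ring]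
  field_simp
  ring

theorem tendsto_blowupPrimitive (hT : Tpre ≠ 0) :
    Tendsto (blowupPrimitive t₀ Tpre α) (𝓝[<] (t₀ + Tpre)) atTop := by
  have hgap : Tendsto (fun t => t₀ + Tpre - t) (𝓝[<] (t₀ + Tpre)) (𝓝[>] 0) := by
    refine tendsto_nhdsWithin_of_tendsto_nhds_of_eventually_within _ ?_
      (eventually_nhdsWithin_of_forall fun t ht => mem_Ioi.2 (sub_pos.2 ht))
    have h0 : Tendsto (fun t => t₀ + Tpre - t) (𝓝 (t₀ + Tpre)) (𝓝 0) := by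
      simpa using (tendsto_id (x := 𝓝 (t₀ + Tpre))).const_sub (t₀ + Tpre)
    exact h0.mono_left nhdsWithin_le_nhds
  have hpole := (tendsto_inv_nhdsGT_zero.comp hgap).const_mul_atTop (sq_pos_of_ne_zero hT)
  have hcubic : Tendsto (fun t => α * (t - t₀) ^ 3 / 3) (𝓝[<] (t₀ + Tpre))
      (𝓝 (α * (t₀ + Tpre - t₀) ^ 3 / 3)) :=
    (Continuous.tendsto (by fun_prop) _).mono_left nhdsWithin_le_nhds
  exact (hpole.atTop_add hcubic).congr fun t => by simp [blowupPrimitive, div_eq_mul_inv]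

theorem forall_eventually_neg_le_of_blowup {c : ℝ} {u u' : ℝ → ℝ} (hT : 0 < Tpre) (hα : 0 ≤ α)
    (hc : 0 < c) (hu : ∀ t ∈ Ico t₀ (t₀ + Tpre), HasDerivAt u (u' t) t)
    (hineq : ∀ ε > 0, ∀ᶠ t in 𝓝[<] (t₀ + Tpre), -ε ≤ u' t + c * blowup t₀ Tpre α t * u t) :
    ∀ ε > 0, ∀ᶠ t in 𝓝[<] (t₀ + Tpre), -ε ≤ u t :=
  forall_eventually_neg_le_of_integrating_factor (F := fun t => c * blowupPrimitive t₀ Tpre α t)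
    (by linarith) hu
    (fun t ht => (hasDerivAt_blowupPrimitive ht.2.ne).const_mul c)
    (fun t _ => mul_nonneg hc.le (blowup_nonneg hα t))
    ((tendsto_blowupPrimitive hT.ne').const_mul_atTop hc) hineq

end Blowup

theorem prescribed_time_safety_initially_unsafe (t₀ Tpre α : ℝ) (hT : 0 < Tpre) (hα : 0 ≤ α)
    (n : ℕ) (hn : 1 ≤ n) (c : ℕ → ℝ)
    (hc : ∀ i ∈ Finset.Icc 1 n, 0 < c i)
    (h h' : ℕ → ℝ → ℝ)
    (hderiv : ∀ i ∈ Finset.Icc 1 n, ∀ t ∈ Set.Ico t₀ (t₀ + Tpre),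
      HasDerivAt (h i) (h' i t) t)
    (hrec : ∀ i ∈ Finset.Icc 1 (n - 1), ∀ t ∈ Set.Ico t₀ (t₀ + Tpre),
      h (i + 1) t = h' i t + c i * blowup t₀ Tpre α t * h i t)
    (hlast : ∀ t ∈ Set.Ico t₀ (t₀ + Tpre),
      h' n t + c n * blowup t₀ Tpre α t * h n t ≥ 0) :
    0 ≤ Filter.liminf (h 1) (nhdsWithin (t₀ + Tpre) (Set.Iio (t₀ + Tpre))) ∧
    (ContinuousWithinAt (h 1) (Set.Iio (t₀ + Tpre)) (t₀ + Tpre) →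
      0 ≤ h 1 (t₀ + Tpre)) := by
  have hIco : ∀ᶠ t in 𝓝[<] (t₀ + Tpre), t ∈ Ico t₀ (t₀ + Tpre) := Ico_mem_nhdsLT (by linarith)
  have hstep : ∀ i ∈ Finset.Icc 1 n,
      (∀ ε > 0, ∀ᶠ t in 𝓝[<] (t₀ + Tpre), -ε ≤ h' i t + c i * blowup t₀ Tpre α t * h i t) →
      ∀ ε > 0, ∀ᶠ t in 𝓝[<] (t₀ + Tpre), -ε ≤ h i t := fun i hi =>
    forall_eventually_neg_le_of_blowup hT hα (hc i hi) (hderiv i hi)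
  have hall : ∀ i, 1 ≤ i → i ≤ n → ∀ ε > 0, ∀ᶠ t in 𝓝[<] (t₀ + Tpre), -ε ≤ h i t := by
    intro i hi hin
    induction hin using Nat.decreasingInduction with
    | self =>
      exact hstep n (by simp [hn]) fun ε hε => hIco.mono fun t ht => by linarith [hlast t ht]
    | of_succ k hk ih =>
      refine hstep k (by simp only [Finset.mem_Icc]; omega) fun ε hε => ?_
      filter_upwards [ih (by omega) ε hε, hIco] with t ht ht'
      rwa [← hrec k (by simp only [Finset.mem_Icc]; omega) t ht']
  have h₁ := hall 1 le_rfl hn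
  exact ⟨liminf_nonneg_of_forall_eventually h₁,
    fun hcont => nonneg_of_tendsto_of_forall_eventually hcont h₁⟩
end
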